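/- Let A be a finite-dimensional nilpotent complex Leibniz algebra with dim(A/A²) = 2 and dim(A²/A³) = 1, and suppose the associated graded algebra gr(A) is a Lie algebra, i.e. [a,b] + [b,a] ∈ A^{i+j+1} for all i, j ≥ 1, a ∈ A^i, b ∈ A^j. Then there exist elements x₁, x₂ ∈ A whose images form a basis of A/A² and an element x₃ ∈ A² whose image spans A²/A³, such that [x₁, x₁] ∈ A³, [x₂, x₂] ∈ A³, [x₂, x₁] − x₃ ∈ A³, and [x₁, x₂] + x₃ ∈ A³. -/

import Mathlib

/-- A complex Leibniz algebra structure on a vector space `V`: a bilinear bracket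
satisfying the Leibniz identity `[x,[y,z]] = [[x,y],z] − [[x,z],y]`. -/
structure LeibnizAlg (V : Type*) [AddCommGroup V] [Module ℂ V] where
  br : V →ₗ[ℂ] V →ₗ[ℂ] V
  leibniz : ∀ x y z : V, br x (br y z) = br (br x y) z - br (br x z) y

namespace LeibnizAlg

variable {V : Type*} [AddCommGroup V] [Module ℂ V]

/-- The span of all products `[u,v]` with `u ∈ S`, `v ∈ T`. -/
def prodSpan (A : LeibnizAlg V) (S T : Submodule ℂ V) : Submodule ℂ V :=
  Submodule.span ℂ {z : V | ∃ u ∈ S, ∃ v ∈ T, z = A.br u v}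

/-- `A.lcs k` is the `(k+1)`-st term `A^{k+1}` of the descending central series:
`A¹ = A`, `A^{k+1} = [A^k, A]`. -/
def lcs (A : LeibnizAlg V) : ℕ → Submodule ℂ V
  | 0 => ⊤
  | k + 1 => A.prodSpan (lcs A k) ⊤

end LeibnizAlg

/-!
Modulo `A³` the bracket is bilinear, alternating (because `[u,u] + [u,u] ∈ A³`) and vanishes
when its left argument lies in `A²`, hence also when its right argument does. It therefore factors
through `Λ²(A/A²)`, which is spanned by `x₁ ∧ x₂` when `x₁, x₂` span `A/A²`. As `A² = [A,A]`,
the element `x₃ := [x₂,x₁]` spans `A²` modulo `A³`, and the remaining relations are the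
alternating property.
-/

open Submodule

theorem Module.exists_linearIndependent_pair_span_eq_top {K M : Type*} [Field K] [AddCommGroup M]
    [Module K M] (h : Module.finrank K M = 2) :
    ∃ y₁ y₂ : M, LinearIndependent K ![y₁, y₂] ∧ span K {y₁, y₂} = ⊤ := by
  have := Module.finite_of_finrank_eq_succ h
  let b := Module.finBasisOfFinrankEq K M h
  refine ⟨b 0, b 1, ?_, ?_⟩
  · convert b.linearIndependent
    ext i
    fin_cases i <;> rfl
  · rw [← b.span_eq]
    congr 1
    ext
    simp [Fin.exists_fin_two, eq_comm]

namespace LinearMap.IsAlt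

variable {R M N : Type*} [CommRing R] [AddCommGroup M] [Module R M] [AddCommGroup N] [Module R N]
  {β : M →ₗ[R] M →ₗ[R] N}

theorem apply_mem_span_singleton (hβ : β.IsAlt) {W : Submodule R M}
    (hW : ∀ w ∈ W, ∀ v, β w v = 0) {x₁ x₂ : M} (hx : W ⊔ span R {x₁, x₂} = ⊤) (u v : M) :
    β u v ∈ R ∙ β x₂ x₁ := by
  have reduce : ∀ u, ∃ a c : R, ∀ v, β u v = β (a • x₁ + c • x₂) v := by
    intro u
    obtain ⟨w, hw, y, hy, rfl⟩ := mem_sup.1 (hx ▸ mem_top : u ∈ W ⊔ span R {x₁, x₂})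
    obtain ⟨a, c, rfl⟩ := mem_span_pair.1 hy
    exact ⟨a, c, fun v => by rw [map_add, LinearMap.add_apply, hW w hw, zero_add]⟩
  obtain ⟨a, c, hu⟩ := reduce u
  obtain ⟨d, e, hv⟩ := reduce v
  have hexpand : β u v = (c * d - a * e) • β x₂ x₁ := by
    -- `β y v = -β v y` lets the reduction act on the right argument as well
    rw [hu, ← hβ.neg, hv, ← hβ.neg (a • x₁ + c • x₂), neg_neg]
    simp only [map_add, map_smul, LinearMap.add_apply, LinearMap.smul_apply, hβ.self_eq_zero,
      ← hβ.neg x₂ x₁]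
    module
  exact mem_span_singleton.2 ⟨_, hexpand.symm⟩

end LinearMap.IsAlt

namespace LeibnizAlg

variable {V : Type*} [AddCommGroup V] [Module ℂ V] (A : LeibnizAlg V)

theorem br_mem_lcs_succ {k : ℕ} {u : V} (hu : u ∈ A.lcs k) (v : V) :
    A.br u v ∈ A.lcs (k + 1) :=
  subset_span ⟨u, hu, v, mem_top, rfl⟩

theorem br_mem_lcs_one (u v : V) : A.br u v ∈ A.lcs 1 :=
  A.br_mem_lcs_succ mem_top v

variable {A}

theorem br_self_mem_lcs_two (h : ∀ u v, A.br u v + A.br v u ∈ A.lcs 2) (u : V) :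
    A.br u u ∈ A.lcs 2 :=
  (smul_mem_iff _ two_ne_zero).1 ((two_smul ℂ (A.br u u)).symm ▸ h u u)

theorem isAlt_br_compr₂_mkQ_lcs_two (h : ∀ u v, A.br u v + A.br v u ∈ A.lcs 2) :
    (A.br.compr₂ (A.lcs 2).mkQ).IsAlt :=
  fun u => (Submodule.Quotient.mk_eq_zero _).2 (br_self_mem_lcs_two h u)

theorem exists_sub_smul_br_mem_lcs_two (h : ∀ u v, A.br u v + A.br v u ∈ A.lcs 2) {x₁ x₂ : V}
    (hx : A.lcs 1 ⊔ span ℂ {x₁, x₂} = ⊤) {w : V} (hw : w ∈ A.lcs 1) :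
    ∃ c : ℂ, w - c • A.br x₂ x₁ ∈ A.lcs 2 := by
  have hle : A.lcs 1 ≤ (ℂ ∙ (A.lcs 2).mkQ (A.br x₂ x₁)).comap (A.lcs 2).mkQ := by
    refine span_le.2 ?_
    rintro _ ⟨u, -, v, -, rfl⟩
    exact (isAlt_br_compr₂_mkQ_lcs_two h).apply_mem_span_singleton
      (fun w hw v => (Submodule.Quotient.mk_eq_zero _).2 (A.br_mem_lcs_succ hw v)) hx u v
  obtain ⟨c, hc⟩ := mem_span_singleton.1 (hle hw)
  exact ⟨c, (Submodule.Quotient.eq _).1 (by simpa using hc.symm)⟩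

end LeibnizAlg

theorem statement16_general {V : Type*} [AddCommGroup V] [Module ℂ V]
    (A : LeibnizAlg V)
    (hd1 : Module.finrank ℂ (V ⧸ A.lcs 1) = 2)
    (hlie : ∀ i j : ℕ, ∀ a ∈ A.lcs i, ∀ b ∈ A.lcs j,
      A.br a b + A.br b a ∈ A.lcs (i + j + 2)) :
    ∃ x₁ x₂ x₃ : V,
      LinearIndependent ℂ ![(A.lcs 1).mkQ x₁, (A.lcs 1).mkQ x₂] ∧
      Submodule.span ℂ {(A.lcs 1).mkQ x₁, (A.lcs 1).mkQ x₂} = ⊤ ∧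
      x₃ ∈ A.lcs 1 ∧
      (∀ w ∈ A.lcs 1, ∃ c : ℂ, w - c • x₃ ∈ A.lcs 2) ∧
      A.br x₁ x₁ ∈ A.lcs 2 ∧
      A.br x₂ x₂ ∈ A.lcs 2 ∧
      A.br x₂ x₁ - x₃ ∈ A.lcs 2 ∧
      A.br x₁ x₂ + x₃ ∈ A.lcs 2 := by
  have hsymm : ∀ u v, A.br u v + A.br v u ∈ A.lcs 2 := fun u v => hlie 0 0 u mem_top v mem_top
  obtain ⟨y₁, y₂, hli, hsp⟩ := Module.exists_linearIndependent_pair_span_eq_top hd1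
  obtain ⟨x₁, rfl⟩ := (A.lcs 1).mkQ_surjective y₁
  obtain ⟨x₂, rfl⟩ := (A.lcs 1).mkQ_surjective y₂
  have hx : A.lcs 1 ⊔ span ℂ {x₁, x₂} = ⊤ := by
    rw [← map_mkQ_eq_top, map_span, Set.image_pair, hsp]
  refine ⟨x₁, x₂, A.br x₂ x₁, hli, hsp, A.br_mem_lcs_one x₂ x₁,
    fun w hw => LeibnizAlg.exists_sub_smul_br_mem_lcs_two hsymm hx hw,
    LeibnizAlg.br_self_mem_lcs_two hsymm x₁, LeibnizAlg.br_self_mem_lcs_two hsymm x₂, by simp,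
    hsymm x₁ x₂⟩

/-- A finite-dimensional nilpotent complex Leibniz algebra with
`dim(A/A²) = 2`, `dim(A²/A³) = 1` and Lie associated graded algebra admits `x₁, x₂`
whose images form a basis of `A/A²` and `x₃ ∈ A²` whose image spans `A²/A³`, with
`[x₁,x₁] ∈ A³`, `[x₂,x₂] ∈ A³`, `[x₂,x₁] − x₃ ∈ A³`, `[x₁,x₂] + x₃ ∈ A³`.
(Here `A.lcs k = A^{k+1}`.) -/
theorem statement16 {V : Type*} [AddCommGroup V] [Module ℂ V] [FiniteDimensional ℂ V]
    (A : LeibnizAlg V)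
    (hnil : ∃ s, A.lcs s = ⊥)
    (hd1 : Module.finrank ℂ (V ⧸ A.lcs 1) = 2)
    (hd2 : Module.finrank ℂ (A.lcs 1 ⧸ (A.lcs 2).comap (A.lcs 1).subtype) = 1)
    (hlie : ∀ i j : ℕ, ∀ a ∈ A.lcs i, ∀ b ∈ A.lcs j,
      A.br a b + A.br b a ∈ A.lcs (i + j + 2)) :
    ∃ x₁ x₂ x₃ : V,
      LinearIndependent ℂ ![(A.lcs 1).mkQ x₁, (A.lcs 1).mkQ x₂] ∧
      Submodule.span ℂ {(A.lcs 1).mkQ x₁, (A.lcs 1).mkQ x₂} = ⊤ ∧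
      x₃ ∈ A.lcs 1 ∧
      (∀ w ∈ A.lcs 1, ∃ c : ℂ, w - c • x₃ ∈ A.lcs 2) ∧
      A.br x₁ x₁ ∈ A.lcs 2 ∧
      A.br x₂ x₂ ∈ A.lcs 2 ∧
      A.br x₂ x₁ - x₃ ∈ A.lcs 2 ∧
      A.br x₁ x₂ + x₃ ∈ A.lcs 2 :=
  statement16_general A hd1 hlie
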